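/- arXiv:2304.09960 — 2 statements merged into one kernel-verified Lean document; each statement's English description precedes it below -/
import Mathlib

section
/- Let Θ be countable, q a pmf on Θ × X × Y with q(x) > 0. Suppose there is θ_x with Σ_{θ≠θ_x} q(x, θ) ≤ ε·q(x, θ_x) for some ε ≥ 0, and suppose for each θ the conditional q(y | x, θ) := q(x, θ, y)/q(x, θ) lies in [0,1]. Then the marginal conditional p(y | x) := q(x, y)/q(x) (with q(x, y) = Σ_θ q(x, θ, y)) satisfies |p(y | x) − q(y | x, θ_x)| ≤ ε. -/
open scoped ENNReal

/-- Proposition 2: language-understanding bound.  Here `q θ = q(x,θ)`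
and `qy θ = q(x,θ,y)` for a fixed prompt `x` and reply `y`; the conditional
`q(y|x,θ) = qy θ / q θ` lies in `[0,1]`, i.e. `qy θ ≤ q θ`.  The LLM conditional
`p(y|x) = q(x,y)/q(x)` deviates from `q(y|x,θ_x)` by at most ε
(the absolute-value bound is expressed as the two one-sided inequalities). -/
theorem language_understanding_bound {Θ : Type*} [Countable Θ]
    (q qy : Θ → ℝ≥0∞) (θx : Θ) (ε : ℝ≥0∞)
    (hle : ∀ θ, qy θ ≤ q θ)
    (hqx_pos : 0 < ∑' θ, q θ) (hqx_fin : ∑' θ, q θ ≠ ⊤)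
    (hdom_pos : 0 < q θx)
    (hres : ∑' θ : {θ : Θ // θ ≠ θx}, q θ.1 ≤ ε * q θx) :
    (∑' θ, qy θ) / (∑' θ, q θ) ≤ qy θx / q θx + ε ∧
    qy θx / q θx ≤ (∑' θ, qy θ) / (∑' θ, q θ) + ε := by
  classical
  set a := qy θx with ha
  set b := q θx with hb
  set S := ∑' θ, q θ with hS
  set Sy := ∑' θ, qy θ with hSy
  set R := ∑' θ, if θ = θx then 0 else q θ with hR
  set Ry := ∑' θ, if θ = θx then 0 else qy θ with hRy
  have hSdecomp : S = b + R := ENNReal.tsum_eq_add_tsum_ite θx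
  have hSydecomp : Sy = a + Ry := ENNReal.tsum_eq_add_tsum_ite θx
  have hRsub : (∑' θ : {θ : Θ // θ ≠ θx}, q θ.1) = R := by
    refine (tsum_subtype ({θ : Θ | θ ≠ θx}) q).trans ?_
    rw [hR]
    congr 1
    funext θ
    by_cases h : θ = θx
    · simp [h, Set.indicator]
    · simp [h, Set.indicator]
  have hResR : R ≤ ε * b := hRsub ▸ hres
  have hRyR : Ry ≤ R := by
    apply ENNReal.tsum_le_tsum
    intro θ
    by_cases h : θ = θx <;> simp [h, hle θ]
  have hb0 : b ≠ 0 := hdom_pos.ne'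
  have hbS : b ≤ S := hSdecomp ▸ le_add_right le_rfl
  have hbT : b ≠ ⊤ := ne_top_of_le_ne_top hqx_fin hbS
  have hS0 : S ≠ 0 := hqx_pos.ne'
  have hab : a ≤ b := hle θx
  constructor
  · calc Sy / S ≤ Sy / b := ENNReal.div_le_div le_rfl hbS
    _ ≤ (a + ε * b) / b := by
        apply ENNReal.div_le_div _ le_rfl
        rw [hSydecomp]
        exact add_le_add le_rfl (hRyR.trans hResR)
    _ = a / b + ε * b / b := ENNReal.add_div
    _ = a / b + ε := by rw [mul_div_assoc, ENNReal.div_self hb0 hbT, mul_one]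
  · have key : a / b ≤ (a + ε * b) / S := by
      rw [ENNReal.le_div_iff_mul_le (Or.inl hS0) (Or.inl hqx_fin)]
      calc a / b * S = a / b * b + a / b * R := by rw [hSdecomp, mul_add]
      _ ≤ a + ε * b := by
          apply add_le_add
          · exact le_of_eq (ENNReal.div_mul_cancel hb0 hbT)
          · calc a / b * R ≤ 1 * R :=
                mul_le_mul_left (ENNReal.div_le_of_le_mul (by simpa using hab)) R
            _ = R := one_mul R
            _ ≤ ε * b := hResR
    calc a / b ≤ (a + ε * b) / S := key
    _ = a / S + ε * b / S := ENNReal.add_div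
    _ ≤ Sy / S + ε := by
        apply add_le_add
        · exact ENNReal.div_le_div (hSydecomp ▸ le_add_right le_rfl) le_rfl
        · calc ε * b / S = ε * (b / S) := mul_div_assoc ε b S
          _ ≤ ε * 1 := mul_le_mul_right (ENNReal.div_le_of_le_mul (by simpa using hbS)) ε
          _ = ε := mul_one ε
end

section
/- Instruction-following bound for ε-ambiguous languages: suppose q(x, y) = Σ_{θ'} q(x, θ')·r_{θ'}(y) where each r_{θ'}(y) := Σ_θ q(θ | θ')·q(y | θ) ∈ [0,1], and Σ_{θ'≠θ_x} q(x, θ') ≤ ε·q(x, θ_x) with q(x, θ_x) > 0 and ε ∈ [0,1). Then |q(x, y)/q(x) − r_{θ_x}(y)| ≤ ε. -/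
/-!
Split both sums at the dominant index `θx`: the mass of the other indices is at most
`ε q(θx) ≤ ε S`, where `S = ∑ q`, and since `r ≤ 1` it moves the mixture `T = ∑ q r` by at most as
much. Hence `T ≤ (r θx + ε) S` and `r θx S ≤ T + ε S`; dividing by `0 < S < ∞` gives both bounds.
-/

open scoped ENNReal

lemma ENNReal.tsum_eq_add_tsum_ne {ι : Type*} (f : ι → ℝ≥0∞) (i : ι) :
    ∑' j, f j = f i + ∑' j : {j // j ≠ i}, f j := by
  rw [← ENNReal.summable.tsum_add_tsum_compl (s := {i}) ENNReal.summable, tsum_singleton]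
  rfl

section Mixture

variable {ι : Type*} {q r : ι → ℝ≥0∞} {i : ι} {ε : ℝ≥0∞}

lemma tsum_ne_mul_le_tsum_ne (hr : ∀ j, r j ≤ 1) :
    ∑' j : {j // j ≠ i}, q j * r j ≤ ∑' j : {j // j ≠ i}, q j :=
  ENNReal.tsum_le_tsum fun j => mul_le_of_le_one_right' (hr j)

lemma tsum_ne_le_mul_tsum (hres : ∑' j : {j // j ≠ i}, q j ≤ ε * q i) :
    ∑' j : {j // j ≠ i}, q j ≤ ε * ∑' j, q j :=
  hres.trans (mul_le_mul_right (ENNReal.le_tsum i) ε)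

lemma tsum_mul_le_add_mul_tsum (hr : ∀ j, r j ≤ 1)
    (hres : ∑' j : {j // j ≠ i}, q j ≤ ε * q i) :
    ∑' j, q j * r j ≤ (r i + ε) * ∑' j, q j :=
  calc ∑' j, q j * r j = q i * r i + ∑' j : {j // j ≠ i}, q j * r j :=
        ENNReal.tsum_eq_add_tsum_ne _ i
    _ ≤ r i * ∑' j, q j + ε * ∑' j, q j := by
        rw [mul_comm]
        exact add_le_add (mul_le_mul_right (ENNReal.le_tsum i) _)
          ((tsum_ne_mul_le_tsum_ne hr).trans (tsum_ne_le_mul_tsum hres))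
    _ = (r i + ε) * ∑' j, q j := (add_mul _ _ _).symm

lemma mul_tsum_le_tsum_mul_add (hr : ∀ j, r j ≤ 1)
    (hres : ∑' j : {j // j ≠ i}, q j ≤ ε * q i) :
    r i * ∑' j, q j ≤ ∑' j, q j * r j + ε * ∑' j, q j :=
  calc r i * ∑' j, q j = q i * r i + r i * ∑' j : {j // j ≠ i}, q j := by
        rw [ENNReal.tsum_eq_add_tsum_ne q i, mul_add, mul_comm]
    _ ≤ q i * r i + ∑' j : {j // j ≠ i}, q j * r j + ε * ∑' j, q j := by
        rw [add_assoc]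
        exact add_le_add_right (le_add_left
          ((mul_le_of_le_one_left' (hr i)).trans (tsum_ne_le_mul_tsum hres))) _
    _ = ∑' j, q j * r j + ε * ∑' j, q j := by
        rw [ENNReal.tsum_eq_add_tsum_ne (fun j => q j * r j) i]

end Mixture

/-- `q θ'` stands for `q(x, θ')` and `r θ'` for `r_{θ'}(y)`; the absolute value of the paper is
split into two one-sided bounds, as `ℝ≥0∞` has no subtraction with the usual meaning. -/
theorem instruction_eps_bound_general {Θ : Type*}
    (q r : Θ → ℝ≥0∞) (θx : Θ) (ε : ℝ≥0∞)
    (hr1 : ∀ θ', r θ' ≤ 1)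
    (hpos : 0 < q θx) (hfin : ∑' θ', q θ' ≠ ⊤)
    (hres : ∑' θ' : {θ' : Θ // θ' ≠ θx}, q θ'.1 ≤ ε * q θx) :
    (∑' θ', q θ' * r θ') / (∑' θ', q θ') ≤ r θx + ε ∧
    r θx ≤ (∑' θ', q θ' * r θ') / (∑' θ', q θ') + ε := by
  have hS0 : ∑' θ', q θ' ≠ 0 := (hpos.trans_le (ENNReal.le_tsum θx)).ne'
  refine ⟨ENNReal.div_le_of_le_mul (tsum_mul_le_add_mul_tsum hr1 hres), ?_⟩
  calc r θx ≤ (∑' θ', q θ' * r θ' + ε * ∑' θ', q θ') / ∑' θ', q θ' :=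
        (ENNReal.le_div_iff_mul_le (.inl hS0) (.inl hfin)).2 (mul_tsum_le_tsum_mul_add hr1 hres)
    _ = (∑' θ', q θ' * r θ') / (∑' θ', q θ') + ε := by
        rw [ENNReal.add_div, ENNReal.mul_div_cancel_right hS0 hfin]

/-- eq. 11: instruction-following bound for ε-ambiguous
languages.  `q θ' = q(x, θ')` and `r θ' = Σ_θ q(θ|θ')·q(y|θ) ∈ [0,1]`, so
`q(x,y) = Σ_{θ'} q(x,θ')·r_{θ'}(y)`; the LLM response distribution deviates
from the ideal mixture `r θ_x` by at most ε (two one-sided inequalities). -/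
theorem instruction_eps_bound {Θ : Type*} [Countable Θ]
    (q r : Θ → ℝ≥0∞) (θx : Θ) (ε : ℝ≥0∞)
    (hr1 : ∀ θ', r θ' ≤ 1)
    (hpos : 0 < q θx) (hfin : ∑' θ', q θ' ≠ ⊤)
    (hres : ∑' θ' : {θ' : Θ // θ' ≠ θx}, q θ'.1 ≤ ε * q θx)
    (hε : ε < 1) :
    (∑' θ', q θ' * r θ') / (∑' θ', q θ') ≤ r θx + ε ∧
    r θx ≤ (∑' θ', q θ' * r θ') / (∑' θ', q θ') + ε :=
  instruction_eps_bound_general q r θx ε hr1 hpos hfin hres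
end
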